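/- arXiv:2209.13820 — 2 statements merged into one kernel-verified Lean document; each statement's English description precedes it below -/
import Mathlib

section
/- For every ρ ∈ [0, 1], the equation (3γ³ − 18γ² + 18γ − 4)/(3γ³) = ρ, equivalently 3(1−ρ)γ³ − 18γ² + 18γ − 4 = 0, has a real solution γ in the interval (1/2, 1). -/
theorem stmt5 (ρ : ℝ) (hρ : ρ ∈ Set.Icc (0 : ℝ) 1) :
    ∃ γ ∈ Set.Ioo (1 / 2 : ℝ) 1,
      (3 * γ ^ 3 - 18 * γ ^ 2 + 18 * γ - 4) / (3 * γ ^ 3) = ρ := by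
  obtain ⟨h0, h1⟩ := hρ
  set g : ℝ → ℝ := fun γ => 3 * (1 - ρ) * γ ^ 3 - 18 * γ ^ 2 + 18 * γ - 4 with hg
  have hc : ContinuousOn g (Set.Icc (1 / 2 : ℝ) 1) := by
    apply Continuous.continuousOn; fun_prop
  have hsub := intermediate_value_Ioo' (by norm_num : (1 / 2 : ℝ) ≤ 1) hc
  have hmem : (0 : ℝ) ∈ Set.Ioo (g 1) (g (1 / 2)) := by
    constructor <;> simp only [hg] <;> nlinarith
  obtain ⟨γ, hγmem, hγ0⟩ := hsub hmem
  refine ⟨γ, hγmem, ?_⟩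
  have hγpos : (0 : ℝ) < γ := lt_trans (by norm_num) hγmem.1
  have h3 : (3 : ℝ) * γ ^ 3 ≠ 0 := by positivity
  rw [div_eq_iff h3]
  simp only [hg] at hγ0
  nlinarith [hγ0]
end

section
/- For every ρ ∈ [0, 1], the equation (3γ⁴ − 24γ³ + 36γ² − 16γ + 2)/(3γ⁴) = ρ has a real solution γ in the interval (0.78, 1.15). -/
theorem stmt7 (ρ : ℝ) (hρ : ρ ∈ Set.Icc (0 : ℝ) 1) :
    ∃ γ ∈ Set.Ioo (0.78 : ℝ) 1.15,
      (3 * γ ^ 4 - 24 * γ ^ 3 + 36 * γ ^ 2 - 16 * γ + 2) / (3 * γ ^ 4) = ρ := by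
  set f : ℝ → ℝ := fun γ => (3 * γ ^ 4 - 24 * γ ^ 3 + 36 * γ ^ 2 - 16 * γ + 2) / (3 * γ ^ 4)
    with hf
  have hcont : ContinuousOn f (Set.Icc (0.785 : ℝ) 1.149) := by
    apply ContinuousOn.div
    · fun_prop
    · fun_prop
    · intro x hx
      have hx1 := hx.1
      have : (0:ℝ) < x := by linarith
      positivity
  have hsub := intermediate_value_Icc' (by norm_num : (0.785:ℝ) ≤ 1.149) hcont
  have hmem : ρ ∈ Set.Icc (f 1.149) (f 0.785) := by
    constructor
    · have : f 1.149 ≤ 0 := by rw [hf]; norm_num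
      linarith [hρ.1]
    · have : (1:ℝ) ≤ f 0.785 := by rw [hf]; norm_num
      linarith [hρ.2]
  obtain ⟨γ, hγ, hfγ⟩ := hsub hmem
  exact ⟨γ, ⟨by linarith [hγ.1], by linarith [hγ.2]⟩, hfγ⟩
end
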